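/- arXiv:1407.5878 — 2 statements merged into one kernel-verified Lean document; each statement's English description precedes it below -/
import Mathlib

section
/- For every ε > 0 there exists N such that for all n ≥ N, (n·2^(n-1))^k < (2^n)! whenever k ≤ (1/2 - ε)·2^n. Consequently, for sufficiently large n there exists a reversible function on n lines not realizable by any cascade of fewer than (1/2 - ε)·2^n · (n/(n + log₂ n - 1)) MCT gates; in particular some function requires exponentially many (in n) MCT gates. -/
/-!
A cascade of fewer than `M` gates is a word of length `< M` over the `n * 2 ^ (n - 1)` MCT
gates, so at most `∑ ℓ < M, (n * 2 ^ (n - 1)) ^ ℓ < (n * 2 ^ (n - 1)) ^ M` functions are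
realized; once this is below `(2 ^ n)! = #Perm (𝔹ⁿ)` some permutation is missed. Comparing
logarithms with `(2 ^ n)! ≥ (2 ^ (n - 1)) ^ 2 ^ (n - 1)`, the bound
`(n * 2 ^ (n - 1)) ^ k < (2 ^ n)!` for `k ≤ (1 / 2 - ε) * 2 ^ n` reduces to
`log₂ n < 2 ε (n - 1)`, which holds for large `n`.
-/

/-- Application of the MCT gate with target `t` and controls `C` (with `t ∉ C`). -/
def mctApply {n : ℕ} (t : Fin n) (C : Finset (Fin n)) (x : Fin n → Bool) : Fin n → Bool :=
  Function.update x t (xor (x t) (decide (∀ i ∈ C, x i = true)))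

open Finset Filter Real
open scoped Nat

theorem Fintype.card_finset_notMem {α : Type*} [Fintype α] [DecidableEq α] (a : α) :
    Fintype.card {s : Finset α // a ∉ s} = 2 ^ (Fintype.card α - 1) := by
  rw [Fintype.card_subtype, ← Finset.card_univ, ← card_erase_of_mem (mem_univ a),
    ← card_powerset]
  congr 1
  ext s
  simp [subset_erase]

abbrev MCTGate (n : ℕ) : Type := (t : Fin n) × {C : Finset (Fin n) // t ∉ C}

theorem card_mctGate (n : ℕ) : Fintype.card (MCTGate n) = n * 2 ^ (n - 1) := by
  simp only [Fintype.card_sigma, Fintype.card_finset_notMem, Fintype.card_fin, sum_const,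
    Finset.card_univ, smul_eq_mul]

theorem exists_perm_ne_foldr {α A : Type*} [Fintype α] [DecidableEq α] [Fintype A]
    (g : A → α → α) {M : ℕ}
    (hM : ∑ ℓ ∈ range M, Fintype.card A ^ ℓ < (Fintype.card α)!) :
    ∃ f : Equiv.Perm α, ∀ L : List A, L.length < M →
      ⇑f ≠ L.foldr (fun a h => g a ∘ h) id := by
  by_contra! h
  choose L hLM hL using h
  let code : Equiv.Perm α → Σ ℓ : Fin M, Fin ℓ → A :=
    fun f => ⟨⟨_, hLM f⟩, (L f).get⟩
  have hcode : Function.Injective code := by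
    intro f f' hff'
    have hL' : L f = L f' := by
      rw [← List.ofFn_get (L f), ← List.ofFn_get (L f')]
      exact congrArg (fun p : Σ ℓ : Fin M, Fin ℓ → A => List.ofFn p.2) hff'
    exact Equiv.coe_fn_injective ((hL f).trans (hL' ▸ (hL f').symm))
  have hcard := Fintype.card_le_of_injective code hcode
  simp only [Fintype.card_perm, Fintype.card_sigma, Fintype.card_pi, prod_const, card_univ,
    Fintype.card_fin, Fin.sum_univ_eq_sum_range (fun ℓ => Fintype.card A ^ ℓ)] at hcard
  exact lt_irrefl _ (hM.trans_le hcard)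

theorem pow_self_le_factorial_two_mul (m : ℕ) : m ^ m ≤ (2 * m)! :=
  calc m ^ m ≤ m ! * (m + 1) ^ m :=
        (Nat.pow_le_pow_left m.le_succ m).trans (Nat.le_mul_of_pos_left _ m.factorial_pos)
    _ ≤ (m + m)! := Nat.factorial_mul_pow_le_factorial
    _ = (2 * m)! := by rw [two_mul]

theorem mul_two_pow_mul_log_two_le_log_factorial (m : ℕ) :
    2 ^ m * (m * log 2) ≤ log ((2 ^ (m + 1))! : ℝ) := by
  have h : ((2 ^ m) ^ 2 ^ m : ℝ) ≤ ((2 ^ (m + 1))! : ℝ) := by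
    rw [pow_succ', ← Nat.cast_ofNat, ← Nat.cast_pow, ← Nat.cast_pow]
    exact_mod_cast pow_self_le_factorial_two_mul (2 ^ m)
  calc 2 ^ m * (m * log 2) = log ((2 ^ m) ^ 2 ^ m : ℝ) := by
        rw [log_pow, log_pow]; push_cast; ring
    _ ≤ _ := log_le_log (by positivity) h

theorem mctGate_pow_lt_factorial {ε : ℝ} (hε : 0 < ε) {n k : ℕ}
    (hlog : log n < 2 * ε * (n - 1) * log 2) (hk : (k : ℝ) ≤ (1 / 2 - ε) * 2 ^ n) :
    ((n : ℝ) * 2 ^ (n - 1)) ^ k < ((2 ^ n)! : ℝ) := by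
  obtain _ | m := n
  · norm_num at hlog; nlinarith [log_pos one_lt_two]
  have hl2 := log_pos one_lt_two
  have hlogm : 0 ≤ log (m + 1 : ℝ) := log_nonneg (by linarith [m.cast_nonneg (α := ℝ)])
  push_cast at hlog hk ⊢
  rw [← log_lt_log_iff (by positivity) (by positivity), log_pow,
    log_mul (by positivity) (by positivity), log_pow]
  have hk' : (k : ℝ) ≤ (1 - 2 * ε) * 2 ^ m := by rw [pow_succ] at hk; linarith
  calc (k : ℝ) * (log (m + 1) + m * log 2)
      ≤ (1 - 2 * ε) * 2 ^ m * (log (m + 1) + m * log 2) := by gcongr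
    _ < 2 ^ m * (m * log 2) := by
        have : (1 - 2 * ε) * (log (m + 1) + m * log 2) < m * log 2 := by nlinarith
        nlinarith [pow_pos (two_pos (α := ℝ)) m]
    _ ≤ log ((2 ^ (m + 1))! : ℝ) := mul_two_pow_mul_log_two_le_log_factorial m

theorem eventually_log_lt_mul_log_two {ε : ℝ} (hε : 0 < ε) :
    ∀ᶠ n : ℕ in atTop, log n < 2 * ε * (n - 1) * log 2 := by
  have hl2 := log_pos one_lt_two
  filter_upwards [(isLittleO_log_id_atTop.comp_tendsto tendsto_natCast_atTop_atTop).bound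
    (mul_pos hε hl2), eventually_ge_atTop 3] with n hbound hn
  have hn' : (3 : ℝ) ≤ n := by exact_mod_cast hn
  simp only [Function.comp_apply, id, norm_eq_abs, abs_of_nonneg (n.cast_nonneg (α := ℝ))]
    at hbound
  nlinarith [le_abs_self (log (n : ℝ)), mul_pos hε hl2]

theorem eventually_mctGate_pow_lt_factorial {ε : ℝ} (hε : 0 < ε) :
    ∀ᶠ n : ℕ in atTop, ∀ k : ℕ, (k : ℝ) ≤ (1 / 2 - ε) * 2 ^ n →
      ((n : ℝ) * 2 ^ (n - 1)) ^ k < ((2 ^ n)! : ℝ) :=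
  (eventually_log_lt_mul_log_two hε).mono fun _ hlog _ hk => mctGate_pow_lt_factorial hε hlog hk

theorem eventually_exists_perm_ne_cascade {ε : ℝ} (hε : 0 < ε) :
    ∀ᶠ n : ℕ in atTop, ∃ f : Equiv.Perm (Fin n → Bool),
      ∀ L : List (MCTGate n), (L.length : ℝ) < (1 / 2 - ε) * 2 ^ n →
          ⇑f ≠ L.foldr (fun g h => mctApply g.1 g.2.1 ∘ h) id := by
  have hroom : ∀ᶠ n : ℕ in atTop, 1 ≤ ε / 2 * (2 : ℝ) ^ n :=
    ((tendsto_pow_atTop_atTop_of_one_lt one_lt_two).const_mul_atTop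
      (half_pos hε)).eventually_ge_atTop 1
  -- the bound at `ε / 2` leaves room to round the length bound up to an integer `M`
  filter_upwards [eventually_mctGate_pow_lt_factorial (half_pos hε), eventually_ge_atTop 2, hroom]
    with n hpow hn hroom
  set M := ⌈(1 / 2 - ε) * (2 : ℝ) ^ n⌉₊
  suffices hcount : ∑ ℓ ∈ range M, (n * 2 ^ (n - 1)) ^ ℓ < (2 ^ n)! by
    obtain ⟨f, hf⟩ := exists_perm_ne_foldr (fun g : MCTGate n => mctApply g.1 g.2.1) (M := M)
      (by rwa [card_mctGate, Fintype.card_fun, Fintype.card_bool, Fintype.card_fin])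
    exact ⟨f, fun L hL => hf L (Nat.lt_ceil.mpr hL)⟩
  rcases M.eq_zero_or_pos with hM | hM
  · simp [hM, Nat.factorial_pos]
  have hMle : (M : ℝ) ≤ (1 / 2 - ε / 2) * 2 ^ n := by
    have := Nat.ceil_lt_add_one (Nat.ceil_pos.mp hM).le
    linarith
  have hgates : 2 ≤ n * 2 ^ (n - 1) := le_mul_of_le_of_one_le hn Nat.one_le_two_pow
  calc ∑ ℓ ∈ range M, (n * 2 ^ (n - 1)) ^ ℓ < (n * 2 ^ (n - 1)) ^ M :=
        Nat.geomSum_lt hgates fun _ => mem_range.mp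
    _ < (2 ^ n)! := by exact_mod_cast hpow M hMle

theorem stmt_7 (ε : ℝ) (hε : 0 < ε) :
    ∃ N : ℕ, ∀ n : ℕ, N ≤ n →
      (∀ k : ℕ, (k : ℝ) ≤ (1 / 2 - ε) * 2 ^ n →
        ((n : ℝ) * 2 ^ (n - 1)) ^ k < (Nat.factorial (2 ^ n) : ℝ)) ∧
      ∃ f : (Fin n → Bool) ≃ (Fin n → Bool),
        ∀ L : List ((t : Fin n) × {C : Finset (Fin n) // t ∉ C}),
          (L.length : ℝ) < (1 / 2 - ε) * 2 ^ n * ((n : ℝ) / ((n : ℝ) + Real.logb 2 n - 1)) →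
          (f : (Fin n → Bool) → (Fin n → Bool)) ≠
            L.foldr (fun g h => mctApply g.1 g.2.1 ∘ h) id := by
  obtain ⟨N, hN⟩ := eventually_atTop.mp <| (eventually_mctGate_pow_lt_factorial hε).and <|
    (eventually_exists_perm_ne_cascade hε).and (eventually_ge_atTop 2)
  refine ⟨N, fun n hn => ?_⟩
  obtain ⟨hpow, ⟨f, hf⟩, hn2⟩ := hN n hn
  refine ⟨hpow, f, fun L hL => hf L ?_⟩
  have hn2' : (2 : ℝ) ≤ n := by exact_mod_cast hn2
  have hlogb : 1 ≤ logb 2 n := by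
    rw [le_logb_iff_rpow_le one_lt_two (by positivity), rpow_one]; exact hn2'
  have hr0 : 0 ≤ (n : ℝ) / (n + logb 2 n - 1) := div_nonneg (by positivity) (by linarith)
  have hr1 : (n : ℝ) / (n + logb 2 n - 1) ≤ 1 := div_le_one_of_le₀ (by linarith) (by linarith)
  have hlen : (0 : ℝ) ≤ L.length := L.length.cast_nonneg
  nlinarith [pow_pos (two_pos (α := ℝ)) n]
end

section
/- Every bijection f : 𝔹^n → 𝔹^n can be written as a composition of at most 2n single-target gates (in fact at most 2n − 1 for n ≥ 1). -/
/-- A single-target gate with target `i` and control function `c` (which must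
not depend on coordinate `i`): flips coordinate `i` iff `c` evaluates to true. -/
def stg {n : ℕ} (i : Fin n) (c : (Fin n → Bool) → Bool) (x : Fin n → Bool) : Fin n → Bool :=
  Function.update x i (xor (x i) (c x))

/-- `c` does not depend on coordinate `i`, i.e. it is a function of the
remaining `n - 1` coordinates. -/
def IndepOf {n : ℕ} (i : Fin n) (c : (Fin n → Bool) → Bool) : Prop :=
  ∀ x y : Fin n → Bool, (∀ j, j ≠ i → x j = y j) → c x = c y

/-!
Fix a coordinate `i` and write `ρ x` for `x` with coordinate `i` flipped. It suffices to find
gates `g₁, g₂` with target `i` such that `g₂ ∘ f ∘ g₁` fixes coordinate `i`: recursing on the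
remaining coordinates gives `2` gates per coordinate, and at the last coordinate the inner map
is the identity, so `g₂ ∘ g₁` merges into a single gate.

Such gates exist as soon as some `s : 𝔹ⁿ → 𝔹` satisfies `s (ρ x) = ¬ s x` and
`s (f⁻¹ (ρ (f x))) = ¬ s x`: then `g₁` writes `s x` into coordinate `i`, and `g₂` writes
`s (f⁻¹ y)` into coordinate `i` of `y = f (g₁ x)`. This is a proper 2-colouring of the union of
the two perfect matchings `x ~ ρ x` and `x ~ f⁻¹ (ρ (f x))`, which exists because all cycles of a
union of two perfect matchings are even; algebraically, with `σ = ρ`, `τ = f⁻¹ ρ f` and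
`π = τ σ`, every `π ^ j σ` is conjugate to `σ` or `τ`, hence fixed-point-free, so `σ x` never
lies in the `π`-orbit of `x`, and colouring orbits in `σ`-swapped pairs works.
-/

open Equiv Finset

theorem isConj_zpow_mul_of_mul_self_eq_one {G : Type*} [Group G] {σ τ : G}
    (hσ : σ * σ = 1) (hτ : τ * τ = 1) (j : ℤ) :
    IsConj σ ((τ * σ) ^ j * σ) ∨ IsConj τ ((τ * σ) ^ j * σ) := by
  have hσ_inv : σ⁻¹ = σ := inv_eq_of_mul_eq_one_right hσ
  have hτ_inv : τ⁻¹ = τ := inv_eq_of_mul_eq_one_right hτ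
  have reflect : ∀ m : ℤ, σ * (τ * σ) ^ (-m) = (τ * σ) ^ m * σ := by
    intro m
    have hconj : σ * (τ * σ) * σ⁻¹ = (τ * σ)⁻¹ := by
      rw [mul_inv_rev, hσ_inv, hτ_inv, mul_assoc, mul_assoc, hσ, mul_one]
    rw [← mul_inv_eq_iff_eq_mul, ← conj_zpow, hconj, inv_zpow', neg_neg]
  rcases Int.even_or_odd' j with ⟨m, rfl | rfl⟩
  · left
    refine isConj_iff.2 ⟨(τ * σ) ^ m, ?_⟩
    rw [← zpow_neg, mul_assoc, reflect, ← mul_assoc, ← zpow_add, two_mul]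
  · right
    have hτ_eq : τ * σ * σ = τ := by rw [mul_assoc, hσ, mul_one]
    refine isConj_iff.2 ⟨(τ * σ) ^ m, ?_⟩
    calc (τ * σ) ^ m * τ * ((τ * σ) ^ m)⁻¹
        = (τ * σ) ^ m * (τ * σ) * (σ * (τ * σ) ^ (-m)) := by
          rw [← mul_assoc, mul_assoc ((τ * σ) ^ m) (τ * σ) σ, hτ_eq, zpow_neg]
      _ = (τ * σ) ^ m * (τ * σ) * ((τ * σ) ^ m * σ) := by rw [reflect]
      _ = (τ * σ) ^ (m + 1 + m) * σ := by rw [← mul_assoc, ← zpow_add_one, ← zpow_add]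
      _ = (τ * σ) ^ (2 * m + 1) * σ := by ring_nf

theorem Equiv.Perm.apply_ne_self_of_isConj {A : Type*} {σ g : Perm A} (h : IsConj σ g)
    (hσ : ∀ x, σ x ≠ x) (x : A) : g x ≠ x := by
  obtain ⟨c, rfl⟩ := isConj_iff.1 h
  intro hx
  rw [Perm.mul_apply, Perm.mul_apply] at hx
  exact hσ (c⁻¹ x) (Perm.eq_inv_iff_eq.2 hx)

theorem Equiv.Perm.not_sameCycle_mul_apply {A : Type*} {σ τ : Perm A}
    (hσ : σ * σ = 1) (hτ : τ * τ = 1) (hσ_ne : ∀ x, σ x ≠ x) (hτ_ne : ∀ x, τ x ≠ x) (x : A) :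
    ¬ (τ * σ).SameCycle x (σ x) := by
  rintro ⟨j, hj⟩
  have hfix : ((τ * σ) ^ (-j) * σ) x = x := by
    rw [Perm.mul_apply, ← hj, zpow_neg, Perm.coe_inv, symm_apply_apply]
  rcases isConj_zpow_mul_of_mul_self_eq_one hσ hτ (-j) with h | h
  · exact Perm.apply_ne_self_of_isConj h hσ_ne x hfix
  · exact Perm.apply_ne_self_of_isConj h hτ_ne x hfix

theorem exists_anti_invariant_of_involutive {A Q : Type*} {σ : A → A}
    (hσ : Function.Involutive σ) (κ : A → Q) (hκ : ∀ x, κ (σ x) ≠ κ x) :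
    ∃ s : A → Bool, (∀ x, s (σ x) = !s x) ∧
      ∀ x y, κ x = κ y → κ (σ x) = κ (σ y) → s x = s y := by
  let e := embeddingToCardinal (α := Q)
  refine ⟨fun x => decide (e (κ x) < e (κ (σ x))), fun x => ?_,
    fun x y hxy hσxy => by simp only [hxy, hσxy]⟩
  have hne : e (κ x) ≠ e (κ (σ x)) := e.injective.ne (hκ x).symm
  simp only [hσ x]
  rcases hne.lt_or_gt with h | h <;> simp [h, h.not_gt]

theorem exists_common_anti_invariant {A : Type*} {σ τ : Perm A}
    (hσ : σ * σ = 1) (hτ : τ * τ = 1) (hσ_ne : ∀ x, σ x ≠ x) (hτ_ne : ∀ x, τ x ≠ x) :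
    ∃ s : A → Bool, (∀ x, s (σ x) = !s x) ∧ ∀ x, s (τ x) = !s x := by
  have hσ_invol : Function.Involutive σ := fun x => by
    rw [← Perm.mul_apply, hσ, Perm.one_apply]
  let orbit : A → Quotient (Perm.SameCycle.setoid (τ * σ)) := Quotient.mk _
  have horbit : ∀ x y, orbit x = orbit y ↔ (τ * σ).SameCycle x y := fun _ _ => Quotient.eq
  obtain ⟨s, hsσ, hs⟩ := exists_anti_invariant_of_involutive hσ_invol orbit
    fun x h => Perm.not_sameCycle_mul_apply hσ hτ hσ_ne hτ_ne x ((horbit _ _).1 h).symm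
  refine ⟨s, hsσ, fun x => ?_⟩
  have hτx : τ x = (τ * σ) (σ x) := by rw [Perm.mul_apply, hσ_invol]
  have hστx : σ (τ x) = (τ * σ).symm x := by
    rw [← Perm.coe_inv, mul_inv_rev, inv_eq_of_mul_eq_one_right hσ,
      inv_eq_of_mul_eq_one_right hτ, Perm.mul_apply]
  rw [← hsσ x]
  refine hs _ _ ((horbit _ _).2 ?_) ((horbit _ _).2 ?_)
  · rw [hτx]
    exact Perm.sameCycle_apply_left.2 (Perm.SameCycle.refl _ _)
  · rw [hστx, hσ_invol]
    exact Perm.sameCycle_symm_apply_left.2 (Perm.SameCycle.refl _ _)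

section Gates

variable {n : ℕ} {i : Fin n} {c c₁ c₂ : (Fin n → Bool) → Bool}

def flipAt (i : Fin n) (x : Fin n → Bool) : Fin n → Bool :=
  Function.update x i (!x i)

theorem flipAt_involutive (i : Fin n) : Function.Involutive (flipAt i) := fun x => by
  simp [flipAt]

theorem flipAt_ne_self (i : Fin n) (x : Fin n → Bool) : flipAt i x ≠ x := fun h => by
  simpa [flipAt] using congrFun h i

theorem eq_or_eq_flipAt {x y : Fin n → Bool} (h : ∀ j, j ≠ i → x j = y j) :
    y = x ∨ y = flipAt i x := by
  rcases Bool.eq_or_eq_not (y i) (x i) with hi | hi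
  · left
    funext j
    rcases eq_or_ne j i with rfl | hj
    · exact hi
    · exact (h j hj).symm
  · right
    funext j
    rcases eq_or_ne j i with rfl | hj
    · simp [flipAt, hi]
    · simp [flipAt, hj, h j hj]

theorem indepOf_iff_flipAt : IndepOf i c ↔ ∀ x, c (flipAt i x) = c x := by
  refine ⟨fun hc x => hc _ _ fun j hj => by simp [flipAt, hj], fun hc x y h => ?_⟩
  rcases eq_or_eq_flipAt h with rfl | rfl
  · rfl
  · exact (hc x).symm

theorem IndepOf.xor (h₁ : IndepOf i c₁) (h₂ : IndepOf i c₂) :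
    IndepOf i (fun x => xor (c₁ x) (c₂ x)) := fun x y h => by
  simp only [h₁ x y h, h₂ x y h]

theorem stg_apply_self (i : Fin n) (c : (Fin n → Bool) → Bool) (x : Fin n → Bool) :
    stg i c x i = xor (x i) (c x) :=
  Function.update_self _ _ _

theorem stg_apply_of_ne (c : (Fin n → Bool) → Bool) (x : Fin n → Bool) {j : Fin n}
    (h : j ≠ i) : stg i c x j = x j :=
  Function.update_of_ne h _ _

theorem stg_stg (h₂ : IndepOf i c₂) (x : Fin n → Bool) :
    stg i c₂ (stg i c₁ x) = stg i (fun x => xor (c₁ x) (c₂ x)) x := by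
  have hc₂ : c₂ (stg i c₁ x) = c₂ x := h₂ _ _ fun j hj => stg_apply_of_ne c₁ x hj
  rw [stg, hc₂, stg_apply_self, stg, Function.update_idem, Bool.xor_assoc, stg]

theorem stg_involutive (hc : IndepOf i c) : Function.Involutive (stg i c) := fun x => by
  rw [stg_stg hc]
  simp [stg]

theorem stg_xor_apply (i : Fin n) (s : (Fin n → Bool) → Bool) (x : Fin n → Bool) :
    stg i (fun x => xor (s x) (x i)) x = Function.update x i (s x) := by
  rw [stg, Bool.xor_left_comm, Bool.xor_self, Bool.xor_false]

theorem apply_update_self_of_anti {s : (Fin n → Bool) → Bool}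
    (hs : ∀ x, s (flipAt i x) = !s x) (x : Fin n → Bool) :
    s (Function.update x i (s x)) = x i := by
  rcases Bool.eq_or_eq_not (s x) (x i) with h | h
  · rw [h, Function.update_eq_self, h]
  · rw [h, ← flipAt, hs, h, Bool.not_not]

theorem indepOf_xor_of_anti {s : (Fin n → Bool) → Bool} (hs : ∀ x, s (flipAt i x) = !s x) :
    IndepOf i (fun x => xor (s x) (x i)) :=
  indepOf_iff_flipAt.2 fun x => by
    show xor (s (flipAt i x)) (flipAt i x i) = xor (s x) (x i)
    rw [hs]
    simp [flipAt]

theorem exists_stg_conj_apply_self (f : Perm (Fin n → Bool)) (i : Fin n) :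
    ∃ c₁ c₂ : (Fin n → Bool) → Bool, IndepOf i c₁ ∧ IndepOf i c₂ ∧
      ∀ x, stg i c₂ (f (stg i c₁ x)) i = x i := by
  let σ := (flipAt_involutive i).toPerm (flipAt i)
  have hσ : σ * σ = 1 := Perm.ext (flipAt_involutive i)
  have hτ : (f⁻¹ * σ * f) * (f⁻¹ * σ * f) = 1 := by
    simp only [mul_assoc, mul_inv_cancel_left, ← mul_assoc σ σ, hσ, one_mul, inv_mul_cancel]
  have hτ_ne : ∀ x, (f⁻¹ * σ * f) x ≠ x :=
    Perm.apply_ne_self_of_isConj (isConj_iff.2 ⟨f⁻¹, by rw [inv_inv]⟩) (flipAt_ne_self i)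
  obtain ⟨s, hsσ, hsτ⟩ := exists_common_anti_invariant hσ hτ (flipAt_ne_self i) hτ_ne
  have hsf : ∀ y, s (f⁻¹ (flipAt i y)) = !s (f⁻¹ y) := fun y => by
    simpa [σ, Perm.mul_apply] using hsτ (f⁻¹ y)
  refine ⟨fun x => xor (s x) (x i), fun y => xor (s (f⁻¹ y)) (y i), indepOf_xor_of_anti hsσ,
    indepOf_xor_of_anti hsf, fun x => ?_⟩
  rw [stg_xor_apply, stg_xor_apply, Function.update_self, Perm.coe_inv, symm_apply_apply]
  exact apply_update_self_of_anti hsσ x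

end Gates

section Circuits

variable {n : ℕ}

def circuit (L : List (Fin n × ((Fin n → Bool) → Bool))) : (Fin n → Bool) → Fin n → Bool :=
  L.foldr (fun p g => stg p.1 p.2 ∘ g) id

theorem circuit_append (L₁ L₂ : List (Fin n × ((Fin n → Bool) → Bool))) :
    circuit (L₁ ++ L₂) = circuit L₁ ∘ circuit L₂ := by
  induction L₁ with
  | nil => rfl
  | cons p L₁ ih => exact congrArg (stg p.1 p.2 ∘ ·) ih

def HasCircuitOfSizeLE (k : ℕ) (f : (Fin n → Bool) → Fin n → Bool) : Prop :=
  ∃ L : List (Fin n × ((Fin n → Bool) → Bool)),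
    (∀ p ∈ L, IndepOf p.1 p.2) ∧ L.length ≤ k ∧ ∀ x, f x = circuit L x

theorem HasCircuitOfSizeLE.mono {k m : ℕ} {f : (Fin n → Bool) → Fin n → Bool}
    (hf : HasCircuitOfSizeLE k f) (hkm : k ≤ m) : HasCircuitOfSizeLE m f :=
  let ⟨L, hL, hlen, hfL⟩ := hf
  ⟨L, hL, hlen.trans hkm, hfL⟩

theorem hasCircuitOfSizeLE_id : HasCircuitOfSizeLE 0 (id : (Fin n → Bool) → Fin n → Bool) :=
  ⟨[], by simp, le_rfl, fun _ => rfl⟩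

theorem hasCircuitOfSizeLE_stg {i : Fin n} {c : (Fin n → Bool) → Bool} (hc : IndepOf i c) :
    HasCircuitOfSizeLE 1 (stg i c) :=
  ⟨[(i, c)], by simpa using hc, le_rfl, fun _ => rfl⟩

theorem HasCircuitOfSizeLE.stg_comp_comp_stg {k : ℕ} {g : (Fin n → Bool) → Fin n → Bool}
    {i j : Fin n} {c₁ c₂ : (Fin n → Bool) → Bool} (hg : HasCircuitOfSizeLE k g)
    (h₁ : IndepOf i c₁) (h₂ : IndepOf j c₂) :
    HasCircuitOfSizeLE (k + 2) (stg j c₂ ∘ g ∘ stg i c₁) := by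
  obtain ⟨L, hL, hlen, hgL⟩ := hg
  refine ⟨(j, c₂) :: (L ++ [(i, c₁)]), ?_, by simpa using hlen, fun x => ?_⟩
  · simp only [List.mem_cons, List.mem_append, List.mem_nil_iff, or_false]
    rintro p (rfl | hp | rfl)
    exacts [h₂, hL p hp, h₁]
  · change _ = stg j c₂ (circuit (L ++ [(i, c₁)]) x)
    rw [circuit_append]
    exact congrArg (stg j c₂) (hgL _)

end Circuits

theorem hasCircuitOfSizeLE_of_apply_eq_of_notMem {n : ℕ} (T : Finset (Fin n))
    (f : Perm (Fin n → Bool)) (hf : ∀ x, ∀ j ∉ T, f x j = x j) :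
    HasCircuitOfSizeLE (2 * #T - 1) f := by
  induction T using Finset.induction_on generalizing f with
  | empty =>
    have hf_id : ⇑f = id := funext fun x => funext fun j => hf x j (notMem_empty j)
    simpa [hf_id] using hasCircuitOfSizeLE_id
  | insert i T hi ih =>
    obtain ⟨c₁, c₂, h₁, h₂, hfix⟩ := exists_stg_conj_apply_self f i
    let f' := (stg_involutive h₂).toPerm _ * f * (stg_involutive h₁).toPerm _
    have hf' : ∀ x, ∀ j ∉ T, f' x j = x j := by
      intro x j hj
      rcases eq_or_ne j i with rfl | hji
      · exact hfix x
      · simp only [f', Perm.mul_apply, Function.Involutive.coe_toPerm]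
        rw [stg_apply_of_ne _ _ hji, hf _ j (by simp [hji, hj]), stg_apply_of_ne _ _ hji]
    have hf_eq : ⇑f = stg i c₂ ∘ f' ∘ stg i c₁ := funext fun x => by
      simp [f', stg_involutive h₁ x, stg_involutive h₂ _]
    rw [hf_eq, card_insert_of_notMem hi]
    rcases T.eq_empty_or_nonempty with rfl | hT
    · have hf'_id : ⇑f' = id := funext fun x => funext fun j => hf' x j (notMem_empty j)
      have hmerge : stg i c₂ ∘ id ∘ stg i c₁ = stg i (fun x => xor (c₁ x) (c₂ x)) :=
        funext (stg_stg h₂)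
      rw [hf'_id, hmerge, card_empty]
      exact hasCircuitOfSizeLE_stg (h₁.xor h₂)
    · exact ((ih f' hf').stg_comp_comp_stg h₁ h₂).mono (by have := hT.card_pos; omega)

theorem stmt_10 (n : ℕ) (f : (Fin n → Bool) ≃ (Fin n → Bool)) :
    (∃ L : List (Fin n × ((Fin n → Bool) → Bool)),
      (∀ p ∈ L, IndepOf p.1 p.2) ∧ L.length ≤ 2 * n ∧
      ∀ x, f x = L.foldr (fun p g => stg p.1 p.2 ∘ g) id x) ∧
    (1 ≤ n → ∃ L : List (Fin n × ((Fin n → Bool) → Bool)),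
      (∀ p ∈ L, IndepOf p.1 p.2) ∧ L.length ≤ 2 * n - 1 ∧
      ∀ x, f x = L.foldr (fun p g => stg p.1 p.2 ∘ g) id x) := by
  obtain ⟨L, hL, hlen, hfL⟩ := hasCircuitOfSizeLE_of_apply_eq_of_notMem univ f (by simp)
  rw [card_univ, Fintype.card_fin] at hlen
  exact ⟨⟨L, hL, by omega, hfL⟩, fun _ => ⟨L, hL, hlen, hfL⟩⟩
end
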